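/- In the Fuel Efficient Convergence algorithm, if a robot is moving (i.e., has a pending nonzero move), then its color is Black, and during its motion the other robot cannot begin a move. -/
import Mathlib


inductive RColor | Black | White
deriving DecidableEq

/-- Look-Compute outcome of the FEC algorithm: given own color and observed
color, return the new color and whether to move to the midpoint.
Only the snapshot {White, White} triggers a move (switching to Black);
Black observing Black switches to White and stays; otherwise stay. -/
def fecLC : RColor → RColor → RColor × Bool
  | RColor.White, RColor.White => (RColor.Black, true)
  | RColor.White, RColor.Black => (RColor.White, false)
  | RColor.Black, RColor.Black => (RColor.White, false)
  | RColor.Black, RColor.White => (RColor.Black, false)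

structure FECRobot where
  pos : EuclideanSpace ℝ (Fin 2)
  col : RColor
  snap : Option (EuclideanSpace ℝ (Fin 2) × RColor)
  pending : Option (EuclideanSpace ℝ (Fin 2))

abbrev FECConfig := FECRobot × FECRobot

/-- ASYNC steps of the FEC algorithm: separate Look, Compute and (possibly
non-rigid) Move phases, one robot at a time. -/
inductive FECStep : FECConfig → FECConfig → Prop
  | look₁ (c : FECConfig) (h : c.1.snap = none) (hp : c.1.pending = none) :
      FECStep c ({ c.1 with snap := some (c.2.pos, c.2.col) }, c.2)
  | look₂ (c : FECConfig) (h : c.2.snap = none) (hp : c.2.pending = none) :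
      FECStep c (c.1, { c.2 with snap := some (c.1.pos, c.1.col) })
  | compute₁ (c : FECConfig) (s : EuclideanSpace ℝ (Fin 2) × RColor)
      (h : c.1.snap = some s) :
      FECStep c ({ c.1 with
        col := (fecLC c.1.col s.2).1
        snap := none
        pending := if (fecLC c.1.col s.2).2 then some (midpoint ℝ c.1.pos s.1)
                   else none }, c.2)
  | compute₂ (c : FECConfig) (s : EuclideanSpace ℝ (Fin 2) × RColor)
      (h : c.2.snap = some s) :
      FECStep c (c.1, { c.2 with
        col := (fecLC c.2.col s.2).1
        snap := none
        pending := if (fecLC c.2.col s.2).2 then some (midpoint ℝ c.2.pos s.1)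
                   else none })
  | move₁ (c : FECConfig) (t : EuclideanSpace ℝ (Fin 2))
      (h : c.1.pending = some t) (y : EuclideanSpace ℝ (Fin 2))
      (hy : y ∈ segment ℝ c.1.pos t) :
      FECStep c ({ c.1 with pos := y, pending := none }, c.2)
  | move₂ (c : FECConfig) (t : EuclideanSpace ℝ (Fin 2))
      (h : c.2.pending = some t) (y : EuclideanSpace ℝ (Fin 2))
      (hy : y ∈ segment ℝ c.2.pos t) :
      FECStep c (c.1, { c.2 with pos := y, pending := none })


def FECInv (r : FECRobot) : Prop :=
  (r.pending ≠ none → r.snap = none) ∧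
  (∀ t, r.pending = some t → r.col = RColor.Black)

lemma fecLC_black (a b : RColor) (h : (fecLC a b).2 = true) :
    (fecLC a b).1 = RColor.Black := by
  cases a <;> cases b <;> simp_all [fecLC]

lemma fec_inv_step {c c' : FECConfig} (h : FECStep c c')
    (hc : FECInv c.1 ∧ FECInv c.2) : FECInv c'.1 ∧ FECInv c'.2 := by
  obtain ⟨⟨h11, h12⟩, ⟨h21, h22⟩⟩ := hc
  cases h with
  | look₁ h hp =>
      refine ⟨⟨fun hne => ?_, fun t ht => ?_⟩, h21, h22⟩ <;> simp_all
  | look₂ h hp =>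
      refine ⟨⟨h11, h12⟩, fun hne => ?_, fun t ht => ?_⟩ <;> simp_all
  | compute₁ s h =>
      refine ⟨⟨fun _ => rfl, fun t ht => ?_⟩, h21, h22⟩
      by_cases hb : (fecLC c.1.col s.2).2 = true
      · exact fecLC_black _ _ hb
      · simp only [FECRobot.mk.injEq] at ht
        rw [Bool.not_eq_true] at hb
        simp [hb] at ht
  | compute₂ s h =>
      refine ⟨⟨h11, h12⟩, fun _ => rfl, fun t ht => ?_⟩
      by_cases hb : (fecLC c.2.col s.2).2 = true
      · exact fecLC_black _ _ hb
      · rw [Bool.not_eq_true] at hb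
        simp [hb] at ht
  | move₁ t h y hy =>
      exact ⟨⟨fun hne => by simp_all, fun t ht => by simp_all⟩, h21, h22⟩
  | move₂ t h y hy =>
      exact ⟨⟨h11, h12⟩, fun hne => by simp_all, fun t ht => by simp_all⟩

lemma fec_inv_reach {c₀ c : FECConfig}
    (h : Relation.ReflTransGen FECStep c₀ c)
    (h0 : FECInv c₀.1 ∧ FECInv c₀.2) : FECInv c.1 ∧ FECInv c.2 := by
  induction h with
  | refl => exact h0
  | tail _ hstep ih => exact fec_inv_step hstep ih

/-- in any configuration reachable (under ASYNC) from an initial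
configuration with no pending moves and no stored snapshots, if a robot has a
pending nonzero move then its color is Black, and while it is in motion the
other robot cannot begin a move: any snapshot the other robot acquires during
that motion shows color Black (hence its Compute produces no move). -/
theorem fec_mover_is_black_and_blocks_other
    (p q : EuclideanSpace ℝ (Fin 2)) (col₁ col₂ : RColor) (c : FECConfig)
    (hreach : Relation.ReflTransGen FECStep
      (⟨p, col₁, none, none⟩, ⟨q, col₂, none, none⟩) c) :
    (∀ t, c.1.pending = some t → t ≠ c.1.pos →
      c.1.col = RColor.Black ∧
      ∀ c', FECStep c c' → ∀ s, c'.2.snap = some s → c.2.snap ≠ some s →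
        s.2 = RColor.Black) ∧
    (∀ t, c.2.pending = some t → t ≠ c.2.pos →
      c.2.col = RColor.Black ∧
      ∀ c', FECStep c c' → ∀ s, c'.1.snap = some s → c.1.snap ≠ some s →
        s.2 = RColor.Black) := by
  have hinv := fec_inv_reach hreach
    (by exact ⟨⟨fun h => rfl, fun t ht => by simp_all⟩,
               ⟨fun h => rfl, fun t ht => by simp_all⟩⟩)
  obtain ⟨⟨_, h1⟩, ⟨_, h2⟩⟩ := hinv
  constructor
  · intro t ht _
    refine ⟨h1 t ht, ?_⟩
    intro c' hstep s hs hne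
    cases hstep with
    | look₂ h hp =>
        have hss : (c.1.pos, c.1.col) = s := by simpa using hs
        rw [← hss]; exact h1 t ht
    | compute₂ s' h => simp at hs
    | look₁ h hp => exact absurd hs hne
    | compute₁ s' h => exact absurd hs hne
    | move₁ t' h y hy => exact absurd hs hne
    | move₂ t' h y hy => exact absurd hs hne
  · intro t ht _
    refine ⟨h2 t ht, ?_⟩
    intro c' hstep s hs hne
    cases hstep with
    | look₁ h hp =>
        have hss : (c.2.pos, c.2.col) = s := by simpa using hs
        rw [← hss]; exact h2 t ht
    | compute₁ s' h => simp at hs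
    | look₂ h hp => exact absurd hs hne
    | compute₂ s' h => exact absurd hs hne
    | move₁ t' h y hy => exact absurd hs hne
    | move₂ t' h y hy => exact absurd hs hne
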